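/- For every τ in the upper half-plane, δ2(-1/τ) = τ^2 δ1(τ). -/

import Mathlib

open Complex Real

/-- The nome `q = e^{2πiτ}`. -/
noncomputable def qq (τ : ℂ) : ℂ := Complex.exp (2 * π * Complex.I * τ)

/-- The half-nome `q^{1/2} = e^{πiτ}`. -/
noncomputable def qh (τ : ℂ) : ℂ := Complex.exp (π * Complex.I * τ)

/-- The Jacobi theta constant `θ₁(0,τ) = 2 q^{1/8} ∏_{j≥1} (1-q^j)(1+q^j)^2`. -/
noncomputable def theta1 (τ : ℂ) : ℂ :=
  2 * Complex.exp (π * Complex.I * τ / 4) *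
    ∏' j : ℕ, ((1 - qq τ ^ (j + 1)) * (1 + qq τ ^ (j + 1)) ^ 2)

/-- The Jacobi theta constant `θ₂(0,τ) = ∏_{j≥1} (1-q^j)(1-q^{j-1/2})^2`. -/
noncomputable def theta2 (τ : ℂ) : ℂ :=
  ∏' j : ℕ, ((1 - qq τ ^ (j + 1)) * (1 - qh τ ^ (2 * j + 1)) ^ 2)

/-- The Jacobi theta constant `θ₃(0,τ) = ∏_{j≥1} (1-q^j)(1+q^{j-1/2})^2`. -/
noncomputable def theta3 (τ : ℂ) : ℂ :=
  ∏' j : ℕ, ((1 - qq τ ^ (j + 1)) * (1 + qh τ ^ (2 * j + 1)) ^ 2)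

/-- `δ₁(τ) = (θ₂(0,τ)⁴ + θ₃(0,τ)⁴)/8`. -/
noncomputable def delta1 (τ : ℂ) : ℂ := (theta2 τ ^ 4 + theta3 τ ^ 4) / 8

/-- `δ₂(τ) = -(θ₁(0,τ)⁴ + θ₃(0,τ)⁴)/8`. -/
noncomputable def delta2 (τ : ℂ) : ℂ := -(theta1 τ ^ 4 + theta3 τ ^ 4) / 8

/-!
Writing `φ(q) = ∏ (1 - q ^ n)`, splitting `φ(q^{1/2})` into its odd and even factors and using
`(1 + a) (1 - a) = 1 - a²` turns the three theta products into eta quotients: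
`θ₂(τ) = η(τ/2)² / η(τ)`, `θ₁(τ) = 2 η(2τ)² / η(τ)` and `θ₃(τ) = η(τ)⁵ / (η(τ/2)² η(2τ)²)`.
The eta transformation `η(-1/τ) = s η(τ)` with `s² = -iτ` then gives `θ₁(-1/τ) = s θ₂(τ)` and
`θ₃(-1/τ) = s θ₃(τ)`; since `s⁴ = -τ²`, taking fourth powers yields the claim.
-/

open Function.Periodic ModularForm

local notation "𝕢" => Function.Periodic.qParam

noncomputable def eulerFunction (q : ℂ) : ℂ := ∏' n : ℕ, (1 - q ^ (n + 1))

section Products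

variable {x : ℂ}

lemma summable_pow_mul_add (hx : ‖x‖ < 1) {a : ℕ} (ha : 0 < a) (b : ℕ) :
    Summable fun n : ℕ ↦ ‖x ^ (a * n + b)‖ := by
  have hxa : ‖x ^ a‖ < 1 := by rw [norm_pow]; exact pow_lt_one₀ (norm_nonneg x) hx ha.ne'
  refine ((summable_geometric_of_lt_one (norm_nonneg _) hxa).mul_left ‖x ^ b‖).congr fun n ↦ ?_
  rw [pow_add, pow_mul, norm_mul, norm_pow (x ^ a), mul_comm]

lemma multipliable_one_add_pow_mul_add (hx : ‖x‖ < 1) {a : ℕ} (ha : 0 < a) (b : ℕ) :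
    Multipliable fun n : ℕ ↦ 1 + x ^ (a * n + b) :=
  multipliable_one_add_of_summable (summable_pow_mul_add hx ha b)

lemma multipliable_one_sub_pow_mul_add (hx : ‖x‖ < 1) {a : ℕ} (ha : 0 < a) (b : ℕ) :
    Multipliable fun n : ℕ ↦ 1 - x ^ (a * n + b) := by
  simpa [sub_eq_add_neg] using
    multipliable_one_add_of_summable (f := fun n : ℕ ↦ -x ^ (a * n + b))
      (by simpa using summable_pow_mul_add hx ha b)

lemma tprod_one_add_mul_tprod_one_sub {R ι : Type*} [CommRing R] [TopologicalSpace R]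
    [ContinuousMul R] [T2Space R] {f : ι → R} (hadd : Multipliable fun i ↦ 1 + f i)
    (hsub : Multipliable fun i ↦ 1 - f i) :
    (∏' i, (1 + f i)) * ∏' i, (1 - f i) = ∏' i, (1 - f i ^ 2) := by
  rw [← hadd.tprod_mul hsub]
  exact tprod_congr fun i ↦ by ring

lemma eulerFunction_eq_tprod_odd_mul (hx : ‖x‖ < 1) :
    eulerFunction x = (∏' n : ℕ, (1 - x ^ (2 * n + 1))) * eulerFunction (x ^ 2) := by
  have heven := multipliable_one_sub_pow_mul_add hx two_pos 1
  have hodd := multipliable_one_sub_pow_mul_add hx two_pos 2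
  rw [eulerFunction, ← tprod_even_mul_odd (f := fun n : ℕ ↦ 1 - x ^ (n + 1)) heven hodd,
    eulerFunction]
  congr 1
  exact tprod_congr fun n ↦ by ring

lemma eulerFunction_mul_tprod_theta2 (hx : ‖x‖ < 1) :
    eulerFunction (x ^ 2) * ∏' j : ℕ, ((1 - (x ^ 2) ^ (j + 1)) * (1 - x ^ (2 * j + 1)) ^ 2) =
      eulerFunction x ^ 2 := by
  have hx2 : ‖x ^ 2‖ < 1 := by rw [norm_pow]; exact pow_lt_one₀ (norm_nonneg x) hx two_ne_zero
  have hodd := multipliable_one_sub_pow_mul_add hx two_pos 1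
  rw [(multipliable_one_sub_pow hx2).tprod_mul (hodd.pow 2), hodd.tprod_pow, ← eulerFunction,
    eulerFunction_eq_tprod_odd_mul hx]
  ring

lemma eulerFunction_mul_tprod_theta1 (hx : ‖x‖ < 1) :
    eulerFunction x * ∏' j : ℕ, ((1 - x ^ (j + 1)) * (1 + x ^ (j + 1)) ^ 2) =
      eulerFunction (x ^ 2) ^ 2 := by
  have hadd : Multipliable fun n : ℕ ↦ 1 + x ^ (n + 1) := by
    simpa using multipliable_one_add_pow_mul_add hx one_pos 1
  have hsub := multipliable_one_sub_pow hx
  have hsq : (∏' j : ℕ, (1 + x ^ (j + 1))) * eulerFunction x = eulerFunction (x ^ 2) := by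
    rw [eulerFunction, tprod_one_add_mul_tprod_one_sub hadd hsub, eulerFunction]
    exact tprod_congr fun n ↦ by ring
  rw [hsub.tprod_mul (hadd.pow 2), hadd.tprod_pow, ← eulerFunction, ← hsq]
  ring

lemma eulerFunction_mul_tprod_theta3 (hx : ‖x‖ < 1) :
    eulerFunction x ^ 2 * eulerFunction (x ^ 4) ^ 2 *
      ∏' j : ℕ, ((1 - (x ^ 2) ^ (j + 1)) * (1 + x ^ (2 * j + 1)) ^ 2) =
      eulerFunction (x ^ 2) ^ 5 := by
  have hx2 : ‖x ^ 2‖ < 1 := by rw [norm_pow]; exact pow_lt_one₀ (norm_nonneg x) hx two_ne_zero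
  have hadd := multipliable_one_add_pow_mul_add hx two_pos 1
  have hsub := multipliable_one_sub_pow_mul_add hx two_pos 1
  have hsq : (∏' j : ℕ, (1 + x ^ (2 * j + 1))) * ∏' j : ℕ, (1 - x ^ (2 * j + 1)) =
      ∏' j : ℕ, (1 - (x ^ 2) ^ (2 * j + 1)) := by
    rw [tprod_one_add_mul_tprod_one_sub hadd hsub]
    exact tprod_congr fun n ↦ by ring
  have h1 := eulerFunction_eq_tprod_odd_mul hx
  have h2 : eulerFunction (x ^ 2) =
      (∏' n : ℕ, (1 - (x ^ 2) ^ (2 * n + 1))) * eulerFunction (x ^ 4) := by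
    simpa [← pow_mul] using eulerFunction_eq_tprod_odd_mul hx2
  have hkey : (∏' j : ℕ, (1 + x ^ (2 * j + 1))) * eulerFunction x * eulerFunction (x ^ 4) =
      eulerFunction (x ^ 2) ^ 2 := by
    rw [h1]
    linear_combination
      eulerFunction (x ^ 2) * eulerFunction (x ^ 4) * hsq - eulerFunction (x ^ 2) * h2
  rw [(multipliable_one_sub_pow hx2).tprod_mul (hadd.pow 2), hadd.tprod_pow, ← eulerFunction]
  linear_combination eulerFunction (x ^ 2) *
    ((∏' j : ℕ, (1 + x ^ (2 * j + 1))) * eulerFunction x * eulerFunction (x ^ 4) +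
      eulerFunction (x ^ 2) ^ 2) * hkey

end Products

lemma qParam_pow (h : ℝ) (n : ℕ) (z : ℂ) : 𝕢 h z ^ n = 𝕢 h (n * z) := by
  rw [qParam, qParam, ← Complex.exp_nat_mul]
  ring_nf

lemma eta_eq_qParam_mul_eulerFunction (z : ℂ) : η z = 𝕢 24 z * eulerFunction (𝕢 1 z) := rfl

lemma qh_eq_qParam (τ : ℂ) : qh τ = 𝕢 1 (τ / 2) := by
  rw [qh, qParam]
  congr 1
  push_cast
  ring

lemma qq_eq_qParam (τ : ℂ) : qq τ = 𝕢 1 τ := by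
  rw [qq, qParam]
  congr 1
  push_cast
  ring

section EtaQuotients

variable {τ : ℂ} (hτ : 0 < τ.im)
include hτ

lemma theta2_mul_eta : theta2 τ * η τ = η (τ / 2) ^ 2 := by
  have hx : ‖𝕢 1 (τ / 2)‖ < 1 := norm_qParam_lt_one one_pos (by simpa using half_pos hτ)
  have hq1 : 𝕢 1 τ = 𝕢 1 (τ / 2) ^ 2 := by rw [qParam_pow]; ring_nf
  have hq24 : 𝕢 24 τ = 𝕢 24 (τ / 2) ^ 2 := by rw [qParam_pow]; ring_nf
  rw [theta2, qq_eq_qParam, qh_eq_qParam, eta_eq_qParam_mul_eulerFunction,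
    eta_eq_qParam_mul_eulerFunction, hq1, hq24]
  linear_combination 𝕢 24 (τ / 2) ^ 2 * eulerFunction_mul_tprod_theta2 hx

lemma theta1_mul_eta : theta1 τ * η τ = 2 * η (2 * τ) ^ 2 := by
  have hx : ‖𝕢 1 τ‖ < 1 := norm_qParam_lt_one one_pos hτ
  have hq1 : 𝕢 1 (2 * τ) = 𝕢 1 τ ^ 2 := by rw [qParam_pow]; ring_nf
  have hq24 : 𝕢 24 (2 * τ) = 𝕢 24 τ ^ 2 := by rw [qParam_pow]; ring_nf
  have hq8 : Complex.exp (π * Complex.I * τ / 4) = 𝕢 24 τ ^ 3 := by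
    rw [qParam_pow, qParam]
    congr 1
    push_cast
    ring
  rw [theta1, qq_eq_qParam, eta_eq_qParam_mul_eulerFunction,
    eta_eq_qParam_mul_eulerFunction, hq1, hq24, hq8]
  linear_combination 2 * 𝕢 24 τ ^ 4 * eulerFunction_mul_tprod_theta1 hx

lemma theta3_mul_eta : theta3 τ * η (τ / 2) ^ 2 * η (2 * τ) ^ 2 = η τ ^ 5 := by
  have hx : ‖𝕢 1 (τ / 2)‖ < 1 := norm_qParam_lt_one one_pos (by simpa using half_pos hτ)
  have hq1 : 𝕢 1 τ = 𝕢 1 (τ / 2) ^ 2 := by rw [qParam_pow]; ring_nf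
  have hq1' : 𝕢 1 (2 * τ) = 𝕢 1 (τ / 2) ^ 4 := by rw [qParam_pow]; ring_nf
  have hq24 : 𝕢 24 τ = 𝕢 24 (τ / 2) ^ 2 := by rw [qParam_pow]; ring_nf
  have hq24' : 𝕢 24 (2 * τ) = 𝕢 24 (τ / 2) ^ 4 := by rw [qParam_pow]; ring_nf
  rw [theta3, qq_eq_qParam, qh_eq_qParam, eta_eq_qParam_mul_eulerFunction,
    eta_eq_qParam_mul_eulerFunction, eta_eq_qParam_mul_eulerFunction, hq1, hq1', hq24, hq24']
  linear_combination 𝕢 24 (τ / 2) ^ 10 * eulerFunction_mul_tprod_theta3 hx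

end EtaQuotients

lemma exists_sq_eq_and_eta_neg_one_div {z : ℂ} (hz : 0 < z.im) :
    ∃ s : ℂ, s ^ 2 = -I * z ∧ η (-1 / z) = s * η z := by
  refine ⟨(Complex.sqrt I)⁻¹ * Complex.sqrt z, ?_, ?_⟩
  · have hsq (w : ℂ) : Complex.sqrt w ^ 2 = w := Complex.cpow_ofNat_inv_pow w 2
    rw [mul_pow, inv_pow, hsq, hsq, Complex.inv_I]
  · simpa [mul_assoc] using eta_comp_eq_csqrt_I_inv hz

lemma pow_four_of_sq_eq_neg_I_mul {s τ : ℂ} (hs : s ^ 2 = -I * τ) : s ^ 4 = -τ ^ 2 := by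
  linear_combination (s ^ 2 - I * τ) * hs + τ ^ 2 * I_sq

section Transformation

variable {τ : ℂ} (hτ : 0 < τ.im)
include hτ

lemma im_neg_one_div_pos : 0 < (-1 / τ).im := by
  have hτ0 : τ ≠ 0 := fun h ↦ by simp [h] at hτ
  rw [neg_div, neg_im, div_im]
  simpa using div_pos hτ (normSq_pos.2 hτ0)

lemma ne_zero_of_sq_eq_neg_I_mul {s : ℂ} (hs : s ^ 2 = -I * τ) : s ≠ 0 := by
  rintro rfl
  obtain rfl : τ = 0 := by simpa using hs
  simp at hτ

lemma theta1_neg_one_div_pow_four : theta1 (-1 / τ) ^ 4 = -τ ^ 2 * theta2 τ ^ 4 := by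
  obtain ⟨s, hs, hηs⟩ := exists_sq_eq_and_eta_neg_one_div hτ
  obtain ⟨t, ht, hηt⟩ :=
    exists_sq_eq_and_eta_neg_one_div (by simpa using half_pos hτ : 0 < (τ / 2).im)
  have key := theta1_mul_eta (im_neg_one_div_pos hτ)
  rw [show 2 * (-1 / τ) = -1 / (τ / 2) by ring, hηt, hηs] at key
  have hθ : theta1 (-1 / τ) = s * theta2 τ := by
    refine mul_right_cancel₀ (mul_ne_zero (ne_zero_of_sq_eq_neg_I_mul hτ hs) (eta_ne_zero hτ)) ?_
    linear_combination key + 2 * η (τ / 2) ^ 2 * ht + I * τ * theta2_mul_eta hτ -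
      theta2 τ * η τ * hs
  rw [hθ, mul_pow, pow_four_of_sq_eq_neg_I_mul hs]

lemma theta3_neg_one_div_pow_four : theta3 (-1 / τ) ^ 4 = -τ ^ 2 * theta3 τ ^ 4 := by
  obtain ⟨s, hs, hηs⟩ := exists_sq_eq_and_eta_neg_one_div hτ
  obtain ⟨t, ht, hηt⟩ :=
    exists_sq_eq_and_eta_neg_one_div (by simpa using half_pos hτ : 0 < (τ / 2).im)
  obtain ⟨u, hu, hηu⟩ :=
    exists_sq_eq_and_eta_neg_one_div (by simpa using hτ : 0 < (2 * τ).im)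
  have key := theta3_mul_eta (im_neg_one_div_pos hτ)
  rw [show (-1 / τ) / 2 = -1 / (2 * τ) by ring, show 2 * (-1 / τ) = -1 / (τ / 2) by ring,
    hηt, hηs, hηu] at key
  have hθ : theta3 (-1 / τ) = s * theta3 τ := by
    have hut : u ^ 2 * t ^ 2 = s ^ 4 := by
      linear_combination t ^ 2 * hu - 2 * I * τ * ht - (s ^ 2 - I * τ) * hs
    have hB : s ^ 4 * (η (2 * τ) ^ 2 * η (τ / 2) ^ 2) ≠ 0 :=
      mul_ne_zero (pow_ne_zero 4 (ne_zero_of_sq_eq_neg_I_mul hτ hs))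
        (mul_ne_zero (pow_ne_zero 2 (eta_ne_zero (by simpa using hτ)))
          (pow_ne_zero 2 (eta_ne_zero (by simpa using half_pos hτ))))
    refine mul_right_cancel₀ hB ?_
    linear_combination key - theta3 (-1 / τ) * η (2 * τ) ^ 2 * η (τ / 2) ^ 2 * hut -
      s ^ 5 * theta3_mul_eta hτ
  rw [hθ, mul_pow, pow_four_of_sq_eq_neg_I_mul hs]

end Transformation

/-- For every `τ` in the upper half-plane, `δ₂(-1/τ) = τ² δ₁(τ)`. -/
theorem delta2_neg_inv (τ : ℂ) (hτ : 0 < τ.im) :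
    delta2 (-1 / τ) = τ ^ 2 * delta1 τ := by
  rw [delta2, delta1, theta1_neg_one_div_pow_four hτ, theta3_neg_one_div_pow_four hτ]
  ring
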